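/- Within the leap-regular range, adding four years adds exactly 1461 days with no round-down: for every valid date D = (y, m, d) with 1900 < y and y + 4 < 2100, the date (y + 4, m, d) is valid, D +P (4, 0, 0) = (y + 4, m, d), and toΔ(D +P (4, 0, 0)) = toΔ(D) + 1461. -/

import Mathlib

/-- A date is a triple of integers (year, month, day). -/
structure Date where
  y : ℤ
  m : ℤ
  d : ℤ

/-- A year is a leap year iff divisible by 4 and (not by 100, or by 400). -/
def isLeap (y : ℤ) : Prop :=
  y % 4 = 0 ∧ (y % 100 ≠ 0 ∨ y % 400 = 0)

/-- Number of days in month `m` of year `y`. -/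
def nbdays (y m : ℤ) : ℤ :=
  if m = 4 ∨ m = 6 ∨ m = 9 ∨ m = 11 then 30
  else if m = 2 then
    (if y % 4 = 0 ∧ (y % 100 ≠ 0 ∨ y % 400 = 0) then 29 else 28)
  else 31

/-- A date is valid iff `1 ≤ m ≤ 12` and `1 ≤ d ≤ nbdays y m`. -/
def Date.valid (D : Date) : Prop :=
  1 ≤ D.m ∧ D.m ≤ 12 ∧ 1 ≤ D.d ∧ D.d ≤ nbdays D.y D.m

/-- Month addition `(y, m, d) +m n`, with round-down of the day component. -/
def addMonths (D : Date) (n : ℤ) : Date :=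
  ⟨D.y + (D.m - 1 + n) / 12,
   1 + (D.m - 1 + n) % 12,
   min D.d (nbdays (D.y + (D.m - 1 + n) / 12) (1 + (D.m - 1 + n) % 12))⟩

/-- A configuration of the small-step day-addition machine:
either a pending addition `D +D n`, or a finished date. -/
inductive Conf where
  | pending (D : Date) (n : ℤ)
  | done (D : Date)

/-- Small-step rules for day addition `+D`. -/
inductive Step : Conf → Conf → Prop where
  | add_days {y m d n : ℤ}
      (h1 : 1 ≤ d + n) (h2 : d + n ≤ nbdays y m) :
      Step (Conf.pending ⟨y, m, d⟩ n) (Conf.done ⟨y, m, d + n⟩)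
  | add_days_over {y m d n : ℤ}
      (h : d + n > nbdays y m) :
      Step (Conf.pending ⟨y, m, d⟩ n)
        (Conf.pending (addMonths ⟨y, m, 1⟩ 1) (n - (nbdays y m - d) - 1))
  | add_days_under1 {y m d n : ℤ}
      (h1 : 1 < d) (h2 : d + n ≤ 0) :
      Step (Conf.pending ⟨y, m, d⟩ n) (Conf.pending ⟨y, m, 1⟩ (d - 1 + n))
  | add_days_under2 {y m n y' m' : ℤ}
      (h1 : 1 + n ≤ 0) (h2 : addMonths ⟨y, m, 1⟩ (-1) = ⟨y', m', 1⟩) :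
      Step (Conf.pending ⟨y, m, 1⟩ n) (Conf.pending ⟨y', m', 1⟩ (n + nbdays y' m'))

/-- Reduction in finitely many steps. -/
def Reduces : Conf → Conf → Prop := Relation.ReflTransGen Step

instance : Nonempty Date := ⟨⟨2000, 3, 1⟩⟩

/-- `addDays D n` is the unique valid normal form of `D +D n`
(when it exists; arbitrary otherwise). -/
noncomputable def addDays (D : Date) (n : ℤ) : Date :=
  Classical.epsilon fun D' : Date =>
    D'.valid ∧ Reduces (Conf.pending D n) (Conf.done D')

/-- Date-period addition `D +P (ny, nm, nd) = (D +m (12·ny + nm)) +D nd`. -/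
noncomputable def addPeriod (D : Date) (P : ℤ × ℤ × ℤ) : Date :=
  addDays (addMonths D (12 * P.1 + P.2.1)) P.2.2

/-- Lexicographic order on dates. -/
def Date.le (a b : Date) : Prop :=
  a.y < b.y ∨ (a.y = b.y ∧ a.m < b.m) ∨ (a.y = b.y ∧ a.m = b.m ∧ a.d ≤ b.d)

/-- Strict lexicographic order on dates. -/
def Date.lt (a b : Date) : Prop :=
  a.y < b.y ∨ (a.y = b.y ∧ a.m < b.m) ∨ (a.y = b.y ∧ a.m = b.m ∧ a.d < b.d)

/-- The epoch date: March 1, 2000. -/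
def epoch : Date := ⟨2000, 3, 1⟩

/-- `toDelta D` is the unique integer `n` with `epoch +D n = D`
(when it exists; arbitrary otherwise). -/
noncomputable def toDelta (D : Date) : ℤ :=
  Classical.epsilon fun n : ℤ => addDays epoch n = D

/-- Days-before-March-1 style cumulative year count. -/
def g (y : ℤ) : ℤ := 365 * y + y / 4 - y / 100 + y / 400

/-- Rata die relative to the epoch (2000,3,1), Hinnant-style with floor division. -/
def delta : Date → ℤ
  | ⟨y, m, d⟩ =>
    (if m ≤ 2 then g (y - 1) + (153 * (m + 9) + 2) / 5
     else g y + (153 * (m - 3) + 2) / 5)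
    + d - 1 - 730485

lemma delta_mk (y m d : ℤ) :
    delta ⟨y, m, d⟩ =
      (if m ≤ 2 then g (y - 1) + (153 * (m + 9) + 2) / 5
       else g y + (153 * (m - 3) + 2) / 5) + d - 1 - 730485 := rfl

lemma delta_epoch : delta epoch = 0 := by norm_num [delta, g, epoch]

lemma nbdays_pos (y m : ℤ) : 1 ≤ nbdays y m := by
  unfold nbdays; split_ifs <;> omega

lemma nbdays_le (y m : ℤ) : nbdays y m ≤ 31 := by
  unfold nbdays; split_ifs <;> omega

lemma delta_d (y m d : ℤ) : delta ⟨y, m, d⟩ = delta ⟨y, m, 1⟩ + d - 1 := by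
  simp only [delta_mk]; split_ifs <;> ring

lemma g_leap (y : ℤ) :
    g y = g (y - 1) + (if y % 4 = 0 ∧ (y % 100 ≠ 0 ∨ y % 400 = 0) then 366 else 365) := by
  unfold g; split_ifs <;> omega

lemma g_succ (y : ℤ) : g y + 365 ≤ g (y + 1) := by
  have h := g_leap (y + 1)
  have b1 : g (y + 1 - 1) = g y := by norm_num
  split_ifs at h <;> omega

lemma g_mono {a b : ℤ} (h : a < b) : g a + 365 ≤ g b := by
  have key : ∀ b : ℤ, a + 1 ≤ b → g a + 365 ≤ g b :=
    Int.le_induction (g_succ a) (fun n _ ih => by have := g_succ n; omega)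
  exact key b h

lemma g_mono' {a b : ℤ} (h : a ≤ b) : g a ≤ g b := by
  rcases eq_or_lt_of_le h with rfl | hl
  · exact le_refl _
  · have := g_mono hl; omega

set_option maxHeartbeats 1000000 in
lemma delta_next (y m : ℤ) (h1 : 1 ≤ m) (h2 : m ≤ 12) :
    delta ⟨y + (m - 1 + 1) / 12, 1 + (m - 1 + 1) % 12, 1⟩ = delta ⟨y, m, 1⟩ + nbdays y m := by
  have hg := g_leap y
  have b1 : g (y + 1 - 1) = g y := by norm_num
  have b2 : g (y + -1) = g (y - 1) := rfl
  have b3 : g (y - 1 + 1) = g y := by norm_num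
  interval_cases m <;>
    · simp only [delta_mk]
      unfold nbdays
      norm_num
      first
      | (split_ifs <;> split_ifs at hg <;> omega)
      | omega
      | (split_ifs at hg <;> omega)

set_option maxHeartbeats 1000000 in
lemma delta_prev (y m : ℤ) (h1 : 1 ≤ m) (h2 : m ≤ 12) :
    delta ⟨y, m, 1⟩
      = delta ⟨y + (m - 1 + -1) / 12, 1 + (m - 1 + -1) % 12, 1⟩
        + nbdays (y + (m - 1 + -1) / 12) (1 + (m - 1 + -1) % 12) := by
  have hg := g_leap y
  have b1 : g (y + 1 - 1) = g y := by norm_num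
  have b2 : g (y + -1) = g (y - 1) := rfl
  have b3 : g (y - 1 + 1) = g y := by norm_num
  interval_cases m <;>
    · simp only [delta_mk]
      unfold nbdays
      norm_num
      first
      | (split_ifs <;> split_ifs at hg <;> omega)
      | omega
      | (split_ifs at hg <;> omega)

/-- Day-of-year bounds: a valid date lies in the year interval `[g yy, g (yy+1))`. -/
lemma delta_year_range (y m d : ℤ) (hm1 : 1 ≤ m) (hm2 : m ≤ 12) (hd1 : 1 ≤ d)
    (hd2 : d ≤ nbdays y m) :
    g (if m ≤ 2 then y - 1 else y) ≤ delta ⟨y, m, d⟩ + 730485 ∧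
    delta ⟨y, m, d⟩ + 730485 < g ((if m ≤ 2 then y - 1 else y) + 1) := by
  by_cases hm : m ≤ 2
  · simp only [if_pos hm, delta_mk]
    have hg := g_leap y
    have b3 : g (y - 1 + 1) = g y := by norm_num
    unfold nbdays at hd2
    interval_cases m <;> norm_num at hd2 ⊢ <;> split_ifs at hd2 hg <;> omega
  · simp only [if_neg hm, delta_mk]
    have hs := g_succ y
    have hle := nbdays_le y m
    omega

set_option maxHeartbeats 1000000 in
lemma delta_inj {y1 m1 d1 y2 m2 d2 : ℤ} (h1 : (Date.mk y1 m1 d1).valid)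
    (h2 : (Date.mk y2 m2 d2).valid) (h : delta ⟨y1, m1, d1⟩ = delta ⟨y2, m2, d2⟩) :
    y1 = y2 ∧ m1 = m2 ∧ d1 = d2 := by
  obtain ⟨a1, b1, c1, e1⟩ := h1; obtain ⟨a2, b2, c2, e2⟩ := h2
  simp only at a1 b1 c1 e1 a2 b2 c2 e2
  have k1 := delta_year_range y1 m1 d1 a1 b1 c1 e1
  have k2 := delta_year_range y2 m2 d2 a2 b2 c2 e2
  have le1 := nbdays_le y1 m1
  have le2 := nbdays_le y2 m2
  have hyy : (if m1 ≤ 2 then y1 - 1 else y1) = (if m2 ≤ 2 then y2 - 1 else y2) := by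
    set A := if m1 ≤ 2 then y1 - 1 else y1
    set B := if m2 ≤ 2 then y2 - 1 else y2
    rcases lt_trichotomy A B with hlt | he | hgt
    · exfalso
      have hAB : A + 1 ≤ B := hlt
      have := g_mono' hAB
      omega
    · exact he
    · exfalso
      have hBA : B + 1 ≤ A := hgt
      have := g_mono' hBA
      omega
  clear k1 k2
  by_cases hc1 : m1 ≤ 2 <;> by_cases hc2 : m2 ≤ 2
  · -- both Jan/Feb
    rw [if_pos hc1, if_pos hc2] at hyy
    obtain rfl : y2 = y1 := by omega
    simp only [delta_mk, if_pos hc1, if_pos hc2] at h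
    unfold nbdays at e1 e2
    interval_cases m1 <;> interval_cases m2 <;> norm_num at e1 e2 ⊢ <;>
      first
      | omega
      | (split_ifs at e1 e2 <;> omega)
  · -- m1 ≤ 2 < m2 : impossible
    exfalso
    rw [if_pos hc1, if_neg hc2] at hyy
    obtain rfl : y2 = y1 - 1 := by omega
    simp only [delta_mk, if_pos hc1, if_neg hc2] at h
    omega
  · -- m2 ≤ 2 < m1 : impossible
    exfalso
    rw [if_neg hc1, if_pos hc2] at hyy
    obtain rfl : y2 = y1 + 1 := by omega
    have bb : g (y1 + 1 - 1) = g y1 := by norm_num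
    simp only [delta_mk, if_neg hc1, if_pos hc2] at h
    omega
  · -- both ≥ March
    rw [if_neg hc1, if_neg hc2] at hyy
    obtain rfl : y2 = y1 := hyy.symm
    simp only [delta_mk, if_neg hc1, if_neg hc2] at h
    unfold nbdays at e1 e2
    have a1' : 3 ≤ m1 := by omega
    have a2' : 3 ≤ m2 := by omega
    interval_cases m1 <;> interval_cases m2 <;> norm_num at e1 e2 ⊢ <;>
      first
      | omega
      | (split_ifs at e1 e2 <;> omega)
lemma valid_mk {y m d : ℤ} (h1 : 1 ≤ m) (h2 : m ≤ 12) (h3 : 1 ≤ d) (h4 : d ≤ nbdays y m) :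
    (Date.mk y m d).valid := ⟨h1, h2, h3, h4⟩

lemma addMonths_one (y m : ℤ) :
    addMonths ⟨y, m, 1⟩ 1 = ⟨y + (m - 1 + 1) / 12, 1 + (m - 1 + 1) % 12, 1⟩ := by
  unfold addMonths
  congr 1
  exact min_eq_left (nbdays_pos _ _)

lemma addMonths_neg (y m : ℤ) :
    addMonths ⟨y, m, 1⟩ (-1) = ⟨y + (m - 1 + -1) / 12, 1 + (m - 1 + -1) % 12, 1⟩ := by
  unfold addMonths
  congr 1
  exact min_eq_left (nbdays_pos _ _)

/-- Validity of a configuration. -/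
def Conf.ok : Conf → Prop
  | .pending D _ => D.valid
  | .done D => D.valid

/-- The invariant value of a configuration. -/
def Conf.val : Conf → ℤ
  | .pending D n => delta D + n
  | .done D => delta D

lemma step_sound {c c' : Conf} (h : Step c c') (hok : c.ok) : c'.ok ∧ c'.val = c.val := by
  cases h with
  | @add_days y m d n h1 h2 =>
    obtain ⟨hm1, hm2, hd1, hd2⟩ := hok
    refine ⟨valid_mk hm1 hm2 h1 h2, ?_⟩
    have e1 := delta_d y m (d + n)
    have e2 := delta_d y m d
    simp only [Conf.val]; omega
  | @add_days_over y m d n h =>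
    obtain ⟨hm1, hm2, hd1, hd2⟩ := hok
    rw [addMonths_one]
    constructor
    · exact valid_mk (by omega) (by omega) le_rfl (nbdays_pos _ _)
    · have e1 := delta_next y m hm1 hm2
      have e2 := delta_d y m d
      simp only [Conf.val]; omega
  | @add_days_under1 y m d n h1 h2 =>
    obtain ⟨hm1, hm2, hd1, hd2⟩ := hok
    refine ⟨valid_mk hm1 hm2 le_rfl (nbdays_pos _ _), ?_⟩
    have e2 := delta_d y m d
    simp only [Conf.val]; omega
  | @add_days_under2 y m n y' m' h1 h2 =>
    obtain ⟨hm1, hm2, hd1, hd2⟩ := hok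
    rw [addMonths_neg] at h2
    injection h2 with hy hm'
    subst hy; subst hm'
    constructor
    · exact valid_mk (by omega) (by omega) le_rfl (nbdays_pos _ _)
    · have e1 := delta_prev y m hm1 hm2
      simp only [Conf.val]; omega

lemma reduces_sound {c c' : Conf} (h : Reduces c c') (hok : c.ok) :
    c'.ok ∧ c'.val = c.val := by
  induction h with
  | refl => exact ⟨hok, rfl⟩
  | tail _ hs ih =>
    obtain ⟨okb, vb⟩ := ih
    obtain ⟨okc, vc⟩ := step_sound hs okb
    exact ⟨okc, vc.trans vb⟩

lemma step_det {c c1 c2 : Conf} (h1 : Step c c1) (h2 : Step c c2) : c1 = c2 := by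
  obtain ⟨⟨y, m, d⟩, n⟩ | D := c
  · have hp := nbdays_pos y m
    cases h1 <;> cases h2 <;> try rfl
    all_goals try (exfalso; omega)
    all_goals rw [addMonths_neg] at *
    all_goals simp_all [Date.mk.injEq]
  · cases h1

lemma done_no_step {D : Date} {c : Conf} (h : Step (Conf.done D) c) : False := by
  cases h

lemma nf_unique : ∀ {c : Conf} {D1 D2 : Date},
    Reduces c (Conf.done D1) → Reduces c (Conf.done D2) → D1 = D2 := by
  intro c D1 D2 h1
  unfold Reduces at h1
  induction h1 using Relation.ReflTransGen.head_induction_on with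
  | refl =>
    intro h2
    rcases Relation.ReflTransGen.cases_head h2 with he | ⟨c', hs, _⟩
    · injection he
    · exact absurd hs done_no_step
  | head hs hrest ih =>
    intro h2
    rcases Relation.ReflTransGen.cases_head h2 with he | ⟨c', hs', hr'⟩
    · subst he; exact absurd hs done_no_step
    · rw [step_det hs hs'] at *
      exact ih hr'
/-- Forward normalization: if the target day count stays ≥ 1, reduction terminates. -/
lemma normA (k : ℕ) : ∀ y m d n : ℤ, (Date.mk y m d).valid → 1 ≤ d + n → n.toNat ≤ k →
    ∃ D', D'.valid ∧ Reduces (Conf.pending ⟨y, m, d⟩ n) (Conf.done D') := by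
  induction k with
  | zero =>
    intro y m d n hv hd hk
    obtain ⟨hm1, hm2, hd1, hd2⟩ : 1 ≤ m ∧ m ≤ 12 ∧ 1 ≤ d ∧ d ≤ nbdays y m := hv
    have hn : n ≤ 0 := by omega
    refine ⟨⟨y, m, d + n⟩, valid_mk hm1 hm2 hd (by omega), ?_⟩
    exact Relation.ReflTransGen.single (Step.add_days hd (by omega))
  | succ k ih =>
    intro y m d n hv hd hk
    obtain ⟨hm1, hm2, hd1, hd2⟩ : 1 ≤ m ∧ m ≤ 12 ∧ 1 ≤ d ∧ d ≤ nbdays y m := hv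
    by_cases hle : d + n ≤ nbdays y m
    · exact ⟨⟨y, m, d + n⟩, valid_mk hm1 hm2 hd hle,
        Relation.ReflTransGen.single (Step.add_days hd hle)⟩
    · have hstep := Step.add_days_over (y := y) (m := m) (d := d) (n := n) (by omega)
      rw [addMonths_one] at hstep
      have hv' : (Date.mk (y + (m - 1 + 1) / 12) (1 + (m - 1 + 1) % 12) 1).valid :=
        valid_mk (by omega) (by omega) le_rfl (nbdays_pos _ _)
      have hn' : (n - (nbdays y m - d) - 1).toNat ≤ k := by omega
      obtain ⟨D', hvD, hr⟩ := ih _ _ _ _ hv' (by omega) hn'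
      exact ⟨D', hvD, Relation.ReflTransGen.head hstep hr⟩

/-- Backward normalization from the first of a month. -/
lemma normB' (k : ℕ) : ∀ y m n : ℤ, (Date.mk y m 1).valid → 1 + n ≤ 0 → (-n).toNat ≤ k →
    ∃ D', D'.valid ∧ Reduces (Conf.pending ⟨y, m, 1⟩ n) (Conf.done D') := by
  induction k with
  | zero => intro y m n hv hn hk; omega
  | succ k ih =>
    intro y m n hv hn hk
    obtain ⟨hm1, hm2, hd1, hd2⟩ : 1 ≤ m ∧ m ≤ 12 ∧ 1 ≤ (1:ℤ) ∧ (1:ℤ) ≤ nbdays y m := hv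
    have hstep := Step.add_days_under2 (y := y) (m := m) (n := n) hn (addMonths_neg y m)
    set y' := y + (m - 1 + -1) / 12 with hy'
    set m' := 1 + (m - 1 + -1) % 12 with hm'
    have hv' : (Date.mk y' m' 1).valid := valid_mk (by omega) (by omega) le_rfl (nbdays_pos _ _)
    have hnb1 : 1 ≤ nbdays y' m' := nbdays_pos _ _
    have hnb2 : nbdays y' m' ≤ 31 := nbdays_le _ _
    by_cases hpos : 1 ≤ 1 + (n + nbdays y' m')
    · obtain ⟨D', hvD, hr⟩ := normA (n + nbdays y' m').toNat y' m' 1 (n + nbdays y' m')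
        hv' hpos le_rfl
      exact ⟨D', hvD, Relation.ReflTransGen.head hstep hr⟩
    · obtain ⟨D', hvD, hr⟩ := ih y' m' (n + nbdays y' m') hv' (by omega) (by omega)
      exact ⟨D', hvD, Relation.ReflTransGen.head hstep hr⟩

/-- Every pending configuration on a valid date normalizes to a valid date. -/
lemma normB (D : Date) (n : ℤ) (hv : D.valid) :
    ∃ D', D'.valid ∧ Reduces (Conf.pending D n) (Conf.done D') := by
  obtain ⟨y, m, d⟩ := D
  by_cases hd : 1 ≤ d + n
  · exact normA n.toNat y m d n hv hd le_rfl
  · obtain ⟨hm1, hm2, hd1, hd2⟩ : 1 ≤ m ∧ m ≤ 12 ∧ 1 ≤ d ∧ d ≤ nbdays y m := hv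
    by_cases h1 : d = 1
    · subst h1
      exact normB' (-n).toNat y m n ⟨hm1, hm2, hd1, hd2⟩ (by omega) le_rfl
    · have hstep := Step.add_days_under1 (y := y) (m := m) (d := d) (n := n)
        (by omega) (by omega)
      obtain ⟨D', hvD, hr⟩ := normB' (-(d - 1 + n)).toNat y m (d - 1 + n)
        (valid_mk hm1 hm2 le_rfl (nbdays_pos _ _)) (by omega) le_rfl
      exact ⟨D', hvD, Relation.ReflTransGen.head hstep hr⟩

lemma addDays_eq {D : Date} {n : ℤ} {D' : Date} (hv : D'.valid)
    (hr : Reduces (Conf.pending D n) (Conf.done D')) : addDays D n = D' := by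
  have hex : ∃ E : Date, E.valid ∧ Reduces (Conf.pending D n) (Conf.done E) := ⟨D', hv, hr⟩
  have hspec := Classical.epsilon_spec hex
  exact nf_unique hspec.2 hr

lemma epoch_valid : epoch.valid := by
  refine ⟨by norm_num [epoch], by norm_num [epoch], by norm_num [epoch], ?_⟩
  show (1 : ℤ) ≤ nbdays 2000 3
  norm_num [nbdays]

lemma addDays_epoch_spec (n : ℤ) :
    (addDays epoch n).valid ∧ delta (addDays epoch n) = n := by
  obtain ⟨D', hv', hr'⟩ := normB epoch n epoch_valid
  have he : addDays epoch n = D' := addDays_eq hv' hr'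
  have hs := reduces_sound hr' (show (Conf.pending epoch n).ok from epoch_valid)
  have hval : delta D' = delta epoch + n := hs.2
  rw [delta_epoch] at hval
  rw [he]
  exact ⟨hv', by omega⟩

lemma delta_inj' {A B : Date} (hA : A.valid) (hB : B.valid) (h : delta A = delta B) : A = B := by
  obtain ⟨y1, m1, d1⟩ := A; obtain ⟨y2, m2, d2⟩ := B
  obtain ⟨e1, e2, e3⟩ := delta_inj hA hB h
  simp [e1, e2, e3]

lemma addDays_epoch_delta {E : Date} (hE : E.valid) : addDays epoch (delta E) = E := by
  obtain ⟨hv', hd'⟩ := addDays_epoch_spec (delta E)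
  exact delta_inj' hv' hE hd'

lemma toDelta_valid {E : Date} (hE : E.valid) : toDelta E = delta E := by
  have hex : ∃ n : ℤ, addDays epoch n = E := ⟨delta E, addDays_epoch_delta hE⟩
  have hspec := Classical.epsilon_spec hex
  have h2 := addDays_epoch_spec (Classical.epsilon fun n : ℤ => addDays epoch n = E)
  unfold toDelta
  rw [hspec] at h2
  exact h2.2.symm
/-- **Adding four years in the leap-regular range adds exactly 1461 days with no
round-down**: for every valid date `(y, m, d)` with `1900 < y` and `y + 4 < 2100`,
`(y + 4, m, d)` is valid, `(y, m, d) +P (4, 0, 0) = (y + 4, m, d)`, and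
`toΔ((y, m, d) +P (4, 0, 0)) = toΔ((y, m, d)) + 1461`. -/
theorem add_four_years (y m d : ℤ) (hv : (Date.mk y m d).valid)
    (h1 : 1900 < y) (h2 : y + 4 < 2100) :
    (Date.mk (y + 4) m d).valid ∧
    addPeriod ⟨y, m, d⟩ (4, 0, 0) = ⟨y + 4, m, d⟩ ∧
    toDelta (addPeriod ⟨y, m, d⟩ (4, 0, 0)) = toDelta ⟨y, m, d⟩ + 1461 := by
  obtain ⟨hm1, hm2, hd1, hd2⟩ : 1 ≤ m ∧ m ≤ 12 ∧ 1 ≤ d ∧ d ≤ nbdays y m := hv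
  have hnb : nbdays (y + 4) m = nbdays y m := by
    unfold nbdays; split_ifs <;> omega
  have hv4 : (Date.mk (y + 4) m d).valid := valid_mk hm1 hm2 hd1 (by omega)
  have hAM : addMonths ⟨y, m, d⟩ 48 = ⟨y + 4, m, d⟩ := by
    show (⟨y + (m - 1 + 48) / 12, 1 + (m - 1 + 48) % 12,
      min d (nbdays (y + (m - 1 + 48) / 12) (1 + (m - 1 + 48) % 12))⟩ : Date) = _
    have e1 : y + (m - 1 + 48) / 12 = y + 4 := by omega
    have e2 : 1 + (m - 1 + 48) % 12 = m := by omega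
    rw [e1, e2, hnb]
    rw [min_eq_left hd2]
  have hstep0 : addDays (⟨y + 4, m, d⟩ : Date) 0 = ⟨y + 4, m, d⟩ := by
    apply addDays_eq hv4
    have h := Relation.ReflTransGen.single
      (Step.add_days (y := y + 4) (m := m) (d := d) (n := 0) (by omega) (by omega))
    simpa [Reduces] using h
  have hper : addPeriod ⟨y, m, d⟩ (4, 0, 0) = ⟨y + 4, m, d⟩ := by
    unfold addPeriod
    norm_num
    rw [hAM, hstep0]
  refine ⟨hv4, hper, ?_⟩
  rw [hper, toDelta_valid hv4, toDelta_valid (⟨hm1, hm2, hd1, hd2⟩ : (Date.mk y m d).valid)]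
  simp only [delta_mk]
  unfold g
  split_ifs <;> omega
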